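/- arXiv:1604.05549 — 6 statements merged into one kernel-verified Lean document; each statement's English description precedes it below -/
import Mathlib

section
/- Let τ > 0, κ > 0, and let M, N be real numbers with N > |M|. For a real number ω > 0, the complex number λ = iω satisfies λ + κM + κN·exp(−λτ) = 0 if and only if ω = κ·√(N² − M²) and κτ·√(N² − M²) = arccos(−M/N) + 2πn for some nonnegative integer n. -/
/-!
Splitting the characteristic equation at `λ = iω` into real and imaginary parts gives
`cos (ωτ) = -M/N` and `ω = κN sin (ωτ)`. Since `ω > 0`, the sine is positive, so
`N sin (ωτ) = √(N² - M²)` and `ω = κ√(N² - M²)`. A cosine value `c ∈ (-1, 1)` together with a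
positive sine pins the angle down to `arccos c` modulo `2π`, and `ωτ > 0` forces the multiple
of `2π` to be nonnegative.
-/

open Real Complex

theorem I_mul_add_mul_exp_eq_zero_iff (τ κ M N ω : ℝ) :
    I * ω + κ * M + κ * N * Complex.exp (-(I * ω) * τ) = 0 ↔
      κ * M + κ * N * Real.cos (ω * τ) = 0 ∧ ω = κ * N * Real.sin (ω * τ) := by
  rw [Complex.ext_iff]
  simp [Complex.exp_re, Complex.exp_im, add_neg_eq_zero]

theorem Real.cos_eq_and_sin_pos_iff {c θ : ℝ} (hc : |c| < 1) :
    Real.cos θ = c ∧ 0 < Real.sin θ ↔ ∃ k : ℤ, θ = arccos c + 2 * π * k := by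
  obtain ⟨hc₁, hc₂⟩ := abs_lt.mp hc
  constructor
  · rintro ⟨hcos, hsin⟩
    rw [← Real.cos_arccos hc₁.le hc₂.le, eq_comm, Real.cos_eq_cos_iff] at hcos
    obtain ⟨k, hk | hk⟩ := hcos
    · exact ⟨k, by rw [hk]; ring⟩
    · rw [hk, show 2 * k * π - arccos c = -arccos c + k * (2 * π) by ring,
        Real.sin_add_int_mul_two_pi, Real.sin_neg] at hsin
      linarith [Real.sin_nonneg_of_nonneg_of_le_pi (Real.arccos_nonneg c)
        (Real.arccos_le_pi c)]
  · rintro ⟨k, rfl⟩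
    rw [show arccos c + 2 * π * k = arccos c + k * (2 * π) by ring,
      Real.cos_add_int_mul_two_pi, Real.sin_add_int_mul_two_pi, Real.cos_arccos hc₁.le hc₂.le,
      Real.sin_arccos]
    exact ⟨rfl, Real.sqrt_pos.mpr (by nlinarith)⟩

theorem Real.exists_int_eq_arccos_add_iff_nat {c θ : ℝ} (hθ : 0 ≤ θ) :
    (∃ k : ℤ, θ = arccos c + 2 * π * k) ↔ ∃ n : ℕ, θ = arccos c + 2 * π * n := by
  refine ⟨?_, fun ⟨n, hn⟩ => ⟨n, mod_cast hn⟩⟩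
  rintro ⟨k, rfl⟩
  have hk : -1 < k := by
    have : (-1 : ℝ) < k := by nlinarith [Real.arccos_le_pi c, Real.pi_pos]
    exact_mod_cast this
  lift k to ℕ using by omega
  exact ⟨k, mod_cast rfl⟩

theorem mul_sin_eq_sqrt_sq_sub_sq {M N θ : ℝ} (hN : 0 < N) (hcos : Real.cos θ = -M / N)
    (hsin : 0 < Real.sin θ) : N * Real.sin θ = √(N ^ 2 - M ^ 2) := by
  rw [← abs_of_pos hsin, abs_sin_eq_sqrt_one_sub_cos_sq, hcos,
    show N ^ 2 - M ^ 2 = N ^ 2 * (1 - (-M / N) ^ 2) by field_simp,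
    Real.sqrt_mul (sq_nonneg N), Real.sqrt_sq hN.le]

/-- Purely imaginary roots λ = iω (ω > 0) of λ + κM + κN·exp(−λτ) = 0, with τ > 0, κ > 0
and N > |M|, are characterized by ω = κ√(N² − M²) and
κτ√(N² − M²) = arccos(−M/N) + 2πn for some n ∈ ℕ. -/
theorem stmt1 (τ κ M N ω : ℝ) (hτ : 0 < τ) (hκ : 0 < κ) (hN : |M| < N) (hω : 0 < ω) :
    (Complex.I * (ω : ℂ) + (κ : ℂ) * (M : ℂ) +
        (κ : ℂ) * (N : ℂ) * Complex.exp (-(Complex.I * (ω : ℂ)) * (τ : ℂ)) = 0) ↔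
    (ω = κ * Real.sqrt (N ^ 2 - M ^ 2) ∧
      ∃ n : ℕ, κ * τ * Real.sqrt (N ^ 2 - M ^ 2) =
        Real.arccos (-M / N) + 2 * Real.pi * (n : ℝ)) := by
  have hN₀ : 0 < N := (abs_nonneg M).trans_lt hN
  have hc : |-M / N| < 1 := by
    rwa [abs_div, abs_neg, abs_of_pos hN₀, div_lt_one hN₀]
  have hcos_iff : κ * M + κ * N * Real.cos (ω * τ) = 0 ↔ Real.cos (ω * τ) = -M / N := by
    rw [mul_assoc κ N, ← mul_add, mul_eq_zero, or_iff_right hκ.ne', eq_div_iff hN₀.ne']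
    constructor <;> intro h <;> linarith
  have hangle : ω = κ * √(N ^ 2 - M ^ 2) → κ * τ * √(N ^ 2 - M ^ 2) = ω * τ := by
    rintro rfl; ring
  rw [I_mul_add_mul_exp_eq_zero_iff, hcos_iff]
  constructor
  · rintro ⟨hcos, hω_eq⟩
    have hsin : 0 < Real.sin (ω * τ) := pos_of_mul_pos_right (hω_eq ▸ hω) (by positivity)
    have hωs : ω = κ * √(N ^ 2 - M ^ 2) := by
      rw [← mul_sin_eq_sqrt_sq_sub_sq hN₀ hcos hsin, ← mul_assoc, ← hω_eq]
    rw [hangle hωs, ← Real.exists_int_eq_arccos_add_iff_nat (by positivity),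
      ← Real.cos_eq_and_sin_pos_iff hc]
    exact ⟨hωs, hcos, hsin⟩
  · rintro ⟨hωs, hn⟩
    rw [hangle hωs, ← Real.exists_int_eq_arccos_add_iff_nat (by positivity),
      ← Real.cos_eq_and_sin_pos_iff hc] at hn
    obtain ⟨hcos, hsin⟩ := hn
    rw [mul_assoc, mul_sin_eq_sqrt_sq_sub_sq hN₀ hcos hsin]
    exact ⟨hcos, hωs⟩
end

section
/- Let κ > 0, τ > 0, let M, N be real numbers, and let ω be a nonzero real number such that iω + κM + κN·exp(−iωτ) = 0. Then 1 − κNτ·exp(−iωτ) = 1 + κMτ + iωτ, this complex number is nonzero, and Re( −(M + N·exp(−iωτ)) / (1 − κNτ·exp(−iωτ)) ) = ω²τ / (κ·|1 + κMτ + iωτ|²) > 0. -/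
open Real Complex

/-!
Eliminating `κ N exp(-sτ) = -(s + κ M)` with the characteristic equation turns the implicit
derivative `dλ/dκ = -(M + N exp(-λτ)) / (1 - κ N τ exp(-λτ))` into `s / (κ (1 + κ M τ + s τ))`.
At `s = iω` its real part is `ω · Im(1 + κ M τ + iωτ) / (κ ‖1 + κ M τ + iωτ‖²) = ω² τ / (κ ‖…‖²)`.
-/

section CharacteristicEquation

variable {κ M N τ s : ℂ}

theorem delay_char_denom_eq (h : s + κ * M + κ * N * exp (-s * τ) = 0) :
    1 - κ * N * τ * exp (-s * τ) = 1 + κ * M * τ + s * τ := by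
  linear_combination (-τ) * h

theorem delay_char_numer_eq (hκ : κ ≠ 0) (h : s + κ * M + κ * N * exp (-s * τ) = 0) :
    -(M + N * exp (-s * τ)) = s / κ := by
  rw [eq_div_iff hκ]
  linear_combination -h

theorem delay_char_quotient_eq (hκ : κ ≠ 0) (h : s + κ * M + κ * N * exp (-s * τ) = 0) :
    -(M + N * exp (-s * τ)) / (1 - κ * N * τ * exp (-s * τ)) =
      s / (κ * (1 + κ * M * τ + s * τ)) := by
  rw [delay_char_numer_eq hκ h, delay_char_denom_eq h, div_div]

end CharacteristicEquation

theorem re_I_mul_div_ofReal_mul (ω κ : ℝ) (z : ℂ) :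
    (I * ω / (κ * z)).re = ω * z.im / (κ * ‖z‖ ^ 2) := by
  rw [← div_div, div_re, Complex.sq_norm]
  simp only [div_ofReal_re, div_ofReal_im, mul_re, mul_im, I_re, I_im, ofReal_re, ofReal_im]
  field_simp
  ring

/-- Transversality condition: at a purely imaginary root iω (ω ≠ 0) of
λ + κM + κN·exp(−λτ) = 0, one has 1 − κNτ·exp(−iωτ) = 1 + κMτ + iωτ ≠ 0 and
Re(−(M + N·exp(−iωτ))/(1 − κNτ·exp(−iωτ))) = ω²τ/(κ·|1 + κMτ + iωτ|²) > 0. -/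
theorem stmt2 (κ τ M N ω : ℝ) (hκ : 0 < κ) (hτ : 0 < τ) (hω : ω ≠ 0)
    (h : Complex.I * (ω : ℂ) + (κ : ℂ) * (M : ℂ) +
      (κ : ℂ) * (N : ℂ) * Complex.exp (-(Complex.I * (ω : ℂ)) * (τ : ℂ)) = 0) :
    (1 - (κ : ℂ) * (N : ℂ) * (τ : ℂ) * Complex.exp (-(Complex.I * (ω : ℂ)) * (τ : ℂ)) =
        1 + (κ : ℂ) * (M : ℂ) * (τ : ℂ) + Complex.I * (ω : ℂ) * (τ : ℂ)) ∧
    (1 + (κ : ℂ) * (M : ℂ) * (τ : ℂ) + Complex.I * (ω : ℂ) * (τ : ℂ) ≠ 0) ∧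
    ((-(((M : ℂ) + (N : ℂ) * Complex.exp (-(Complex.I * (ω : ℂ)) * (τ : ℂ))) /
        (1 - (κ : ℂ) * (N : ℂ) * (τ : ℂ) *
          Complex.exp (-(Complex.I * (ω : ℂ)) * (τ : ℂ))))).re =
      ω ^ 2 * τ / (κ * ‖1 + (κ : ℂ) * (M : ℂ) * (τ : ℂ) +
        Complex.I * (ω : ℂ) * (τ : ℂ)‖ ^ 2)) ∧
    (0 < ω ^ 2 * τ / (κ * ‖1 + (κ : ℂ) * (M : ℂ) * (τ : ℂ) +
        Complex.I * (ω : ℂ) * (τ : ℂ)‖ ^ 2)) := by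
  set D : ℂ := 1 + κ * M * τ + I * ω * τ
  have hD_im : D.im = ω * τ := by simp [D]
  have hD : D ≠ 0 := fun h0 ↦ mul_ne_zero hω hτ.ne' (by simpa [h0] using hD_im.symm)
  refine ⟨delay_char_denom_eq h, hD, ?_, by positivity⟩
  rw [← neg_div, delay_char_quotient_eq (by exact_mod_cast hκ.ne') h,
    re_I_mul_div_ofReal_mul, hD_im]
  ring
end

section
/- Let α > 0, β > 0, 0 < k < 1, C > 0, τ > 0, and let B be an integer with B ≥ 1. Then there exists a unique w > 0 satisfying α·w^(k−1)·(1 − 2(w/(Cτ))^B) = β·w·(w/(Cτ))^B. Moreover this w satisfies 2(w/(Cτ))^B < 1. -/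
/-!
Put `c = Cτ` and `x = (w/c)^B`. Multiplying the equilibrium equation by `w^(1-k) > 0` turns it into
`x (β w^(2-k) + 2α) = α`, whose left side is a continuous function of `w ≥ 0` that vanishes at `0`,
exceeds `α` at `w = c` and is strictly increasing; so it takes the value `α` exactly once.
At that point `2αx = α - βx w^(2-k) < α`, i.e. `2x < 1`.
-/

open Real Set

lemma equilibrium_eq_iff {α β k w : ℝ} (hw : 0 < w) (x : ℝ) :
    α * w ^ (k - 1) * (1 - 2 * x) = β * w * x ↔ x * (β * w ^ (2 - k) + 2 * α) = α := by
  have hw_split : w = w ^ (2 - k) * w ^ (k - 1) := by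
    rw [← rpow_add hw]
    norm_num
  have hpos : 0 < w ^ (k - 1) := rpow_pos_of_pos hw _
  constructor <;> intro h
  · have h' : (x * (β * w ^ (2 - k) + 2 * α) - α) * w ^ (k - 1) = 0 := by
      linear_combination -h - (β * x) * hw_split
    exact sub_eq_zero.1 ((mul_eq_zero.1 h').resolve_right hpos.ne')
  · linear_combination (-w ^ (k - 1)) * h - (β * x) * hw_split

lemma two_mul_lt_one_of_mul_add_eq {α x y : ℝ} (hα : 0 < α) (hx : 0 < x) (hy : 0 < y)
    (h : x * (y + 2 * α) = α) : 2 * x < 1 := by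
  nlinarith [mul_pos hx hy]

section lossBalance

variable {α β k c : ℝ} {n : ℕ}

noncomputable def lossBalance (α β k c : ℝ) (n : ℕ) (w : ℝ) : ℝ :=
  (w / c) ^ n * (β * w ^ (2 - k) + 2 * α)

lemma lossBalance_continuous (hk : k ≤ 2) : Continuous (lossBalance α β k c n) := by
  have := continuous_rpow_const (q := 2 - k) (by linarith)
  unfold lossBalance
  fun_prop

lemma lossBalance_strictMonoOn (hα : 0 < α) (hβ : 0 ≤ β) (hk : k ≤ 2) (hc : 0 < c)
    (hn : n ≠ 0) : StrictMonoOn (lossBalance α β k c n) (Ici 0) := by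
  intro a (ha : 0 ≤ a) b (hb : 0 ≤ b) hab
  have h_pow : (a / c) ^ n < (b / c) ^ n := pow_lt_pow_left₀ (by gcongr) (by positivity) hn
  have h_rpow : a ^ (2 - k) ≤ b ^ (2 - k) := rpow_le_rpow ha hab.le (by linarith)
  have h_pos : 0 < β * a ^ (2 - k) + 2 * α := by
    have := mul_nonneg hβ (rpow_nonneg ha (2 - k))
    linarith
  exact mul_lt_mul h_pow (by gcongr) h_pos (by positivity)

lemma exists_lossBalance_eq (hα : 0 < α) (hβ : 0 ≤ β) (hk : k ≤ 2) (hc : 0 < c) (hn : n ≠ 0) :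
    ∃ w ∈ Ioo 0 c, lossBalance α β k c n w = α := by
  have h_zero : lossBalance α β k c n 0 = 0 := by simp [lossBalance, hn]
  have h_c : α < lossBalance α β k c n c := by
    have : 0 ≤ β * c ^ (2 - k) := by positivity
    simp only [lossBalance, div_self hc.ne', one_pow, one_mul]
    linarith
  exact intermediate_value_Ioo hc.le (lossBalance_continuous hk).continuousOn
    ⟨by rwa [h_zero], h_c⟩

end lossBalance

theorem stmt9_general (α β k C τ : ℝ) (B : ℤ) (hα : 0 < α) (hβ : 0 < β)
    (hk1 : k < 1) (hC : 0 < C) (hτ : 0 < τ) (hB : 1 ≤ B) :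
    (∃! w : ℝ, 0 < w ∧
      α * w ^ (k - 1) * (1 - 2 * (w / (C * τ)) ^ B) = β * w * (w / (C * τ)) ^ B) ∧
    (∀ w : ℝ, (0 < w ∧
        α * w ^ (k - 1) * (1 - 2 * (w / (C * τ)) ^ B) = β * w * (w / (C * τ)) ^ B) →
      2 * (w / (C * τ)) ^ B < 1) := by
  obtain ⟨n, rfl⟩ : ∃ n : ℕ, B = n := ⟨B.toNat, (Int.toNat_of_nonneg (by omega)).symm⟩
  have hn : n ≠ 0 := by omega
  have hc : 0 < C * τ := mul_pos hC hτ
  have hk : k ≤ 2 := by linarith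
  simp only [zpow_natCast]
  have h_iff : ∀ w, 0 < w → (α * w ^ (k - 1) * (1 - 2 * (w / (C * τ)) ^ n) =
      β * w * (w / (C * τ)) ^ n ↔ lossBalance α β k (C * τ) n w = α) :=
    fun w hw => equilibrium_eq_iff hw _
  obtain ⟨w, hw, hw_eq⟩ := exists_lossBalance_eq hα hβ.le hk hc hn
  refine ⟨⟨w, ⟨hw.1, (h_iff w hw.1).2 hw_eq⟩, ?_⟩, ?_⟩
  · rintro y ⟨hy, hy_eq⟩
    exact (lossBalance_strictMonoOn hα hβ.le hk hc hn).injOn hy.le hw.1.le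
      (((h_iff y hy).1 hy_eq).trans hw_eq.symm)
  · rintro y ⟨hy, hy_eq⟩
    exact two_mul_lt_one_of_mul_add_eq hα (by positivity) (by positivity) ((h_iff y hy).1 hy_eq)

/-- Case II equilibrium: there is a unique w > 0 with
α·w^(k−1)·(1 − 2(w/(Cτ))^B) = β·w·(w/(Cτ))^B, and this w satisfies 2(w/(Cτ))^B < 1. -/
theorem stmt9 (α β k C τ : ℝ) (B : ℤ) (hα : 0 < α) (hβ : 0 < β)
    (hk0 : 0 < k) (hk1 : k < 1) (hC : 0 < C) (hτ : 0 < τ) (hB : 1 ≤ B) :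
    (∃! w : ℝ, 0 < w ∧
      α * w ^ (k - 1) * (1 - 2 * (w / (C * τ)) ^ B) = β * w * (w / (C * τ)) ^ B) ∧
    (∀ w : ℝ, (0 < w ∧
        α * w ^ (k - 1) * (1 - 2 * (w / (C * τ)) ^ B) = β * w * (w / (C * τ)) ^ B) →
      2 * (w / (C * τ)) ^ B < 1) :=
  stmt9_general α β k C τ B hα hβ hk1 hC hτ hB
end

section
/- Let α > 0, β > 0, 0 < k < 1, C > 0, τ > 0, and let B be an integer with B ≥ 1. Then there exists a unique w > 0 satisfying α·w^(k−1)·(1 − (1 + 2^B)(w/(Cτ))^B) = β·w·(1 + 2^B)(w/(Cτ))^B. Moreover this w satisfies (1 + 2^B)(w/(Cτ))^B < 1. -/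
/-!
Dividing the balance equation `α w^(k-1) (1 - p(w)) = β w p(w)` by `w^(k-1)` turns it into
`p(w) (α + β w^(2-k)) = α`. For a loss probability `p` that vanishes at `0` and increases
strictly, the left side increases strictly from `0` and eventually exceeds `α`, so the
intermediate value theorem gives exactly one positive solution, and there `p(w) < 1`
because `β w^(2-k) > 0`.
-/

open Real Set

lemma existsUnique_pos_eq_of_strictMonoOn {f : ℝ → ℝ} {y b : ℝ}
    (hcont : ContinuousOn f (Ici 0)) (hmono : StrictMonoOn f (Ici 0))
    (h0 : f 0 < y) (hb : 0 ≤ b) (hyb : y < f b) :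
    ∃! w, 0 < w ∧ f w = y := by
  obtain ⟨w, ⟨hw0, -⟩, hw⟩ :=
    intermediate_value_Ioo hb (hcont.mono Icc_subset_Ici_self) ⟨h0, hyb⟩
  refine ⟨w, ⟨hw0, hw⟩, fun v ⟨hv0, hv⟩ => ?_⟩
  exact hmono.injOn (mem_Ici.mpr hv0.le) (mem_Ici.mpr hw0.le) (hv.trans hw.symm)

lemma balance_iff_mul_add_eq {α β k w p : ℝ} (hw : 0 < w) :
    α * w ^ (k - 1) * (1 - p) = β * w * p ↔ p * (α + β * w ^ (2 - k)) = α := by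
  have hpos : 0 < w ^ (k - 1) := rpow_pos_of_pos hw _
  have hw2 : w ^ (2 - k) = w / w ^ (k - 1) := by
    rw [show (2 : ℝ) - k = 1 - (k - 1) by ring, rpow_sub hw, rpow_one]
  rw [hw2]
  constructor <;> intro h
  · field_simp
    linear_combination -h
  · field_simp at h
    linear_combination -h

section Balance

variable {p : ℝ → ℝ} {α β k : ℝ}

lemma strictMonoOn_mul_add_rpow (hmono : StrictMonoOn p (Ici 0)) (hp0 : p 0 = 0)
    (hα : 0 < α) (hβ : 0 < β) (hk : k < 2) :
    StrictMonoOn (fun w => p w * (α + β * w ^ (2 - k))) (Ici 0) := by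
  intro x hx y hy hxy
  have hpx : 0 ≤ p x := hp0 ▸ hmono.monotoneOn self_mem_Ici hx hx
  have hxk : 0 ≤ x ^ (2 - k) := rpow_nonneg hx _
  have hrpow : x ^ (2 - k) < y ^ (2 - k) := rpow_lt_rpow hx hxy (by linarith)
  exact mul_lt_mul'' (hmono hx hy hxy) (by gcongr) hpx (by positivity)

theorem existsUnique_balance (hcont : ContinuousOn p (Ici 0))
    (hmono : StrictMonoOn p (Ici 0)) (hp0 : p 0 = 0) {b : ℝ} (hb : 0 ≤ b) (hpb : 1 < p b)
    (hα : 0 < α) (hβ : 0 < β) (hk : k < 2) :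
    ∃! w, 0 < w ∧ α * w ^ (k - 1) * (1 - p w) = β * w * p w := by
  have hcontF : ContinuousOn (fun w => p w * (α + β * w ^ (2 - k))) (Ici 0) :=
    hcont.mul (continuousOn_const.add
      (continuousOn_const.mul (continuousOn_id.rpow_const fun _ _ => Or.inr (by linarith))))
  have hFb : α < p b * (α + β * b ^ (2 - k)) := by
    have : 0 ≤ β * b ^ (2 - k) := by positivity
    nlinarith
  obtain ⟨w, ⟨hw0, hw⟩, huniq⟩ := existsUnique_pos_eq_of_strictMonoOn hcontF
    (strictMonoOn_mul_add_rpow hmono hp0 hα hβ hk) (by simpa [hp0] using hα) hb hFb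
  refine ⟨w, ⟨hw0, (balance_iff_mul_add_eq hw0).mpr hw⟩, fun v ⟨hv0, hv⟩ => ?_⟩
  exact huniq v ⟨hv0, (balance_iff_mul_add_eq hv0).mp hv⟩

lemma lt_one_of_balance (hα : 0 < α) (hβ : 0 < β) {w : ℝ} (hw : 0 < w)
    (h : α * w ^ (k - 1) * (1 - p w) = β * w * p w) : p w < 1 := by
  rw [balance_iff_mul_add_eq hw] at h
  have : 0 < β * w ^ (2 - k) := by positivity
  nlinarith

end Balance

lemma strictMonoOn_mul_div_pow {A c : ℝ} {n : ℕ} (hA : 0 < A) (hc : 0 < c) (hn : n ≠ 0) :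
    StrictMonoOn (fun w : ℝ => A * (w / c) ^ n) (Ici 0) := by
  intro x hx y _ hxy
  have hx' : 0 ≤ x / c := div_nonneg hx hc.le
  exact mul_lt_mul_of_pos_left (pow_lt_pow_left₀ (by gcongr) hx' hn) hA

theorem stmt10_general (α β k C τ : ℝ) (B : ℤ) (hα : 0 < α) (hβ : 0 < β)
    (hk1 : k < 1) (hC : 0 < C) (hτ : 0 < τ) (hB : 1 ≤ B) :
    (∃! w : ℝ, 0 < w ∧
      α * w ^ (k - 1) * (1 - (1 + (2 : ℝ) ^ B) * (w / (C * τ)) ^ B) =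
        β * w * ((1 + (2 : ℝ) ^ B) * (w / (C * τ)) ^ B)) ∧
    (∀ w : ℝ, (0 < w ∧
        α * w ^ (k - 1) * (1 - (1 + (2 : ℝ) ^ B) * (w / (C * τ)) ^ B) =
          β * w * ((1 + (2 : ℝ) ^ B) * (w / (C * τ)) ^ B)) →
      (1 + (2 : ℝ) ^ B) * (w / (C * τ)) ^ B < 1) := by
  lift B to ℕ using by omega with n
  have hn : n ≠ 0 := by omega
  simp only [zpow_natCast]
  have hc : 0 < C * τ := mul_pos hC hτ
  have hA : 1 < 1 + (2 : ℝ) ^ n := by linarith [pow_pos (two_pos : (0 : ℝ) < 2) n]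
  refine ⟨existsUnique_balance (by fun_prop) (strictMonoOn_mul_div_pow (by linarith) hc hn)
    (by simp [hn]) hc.le (by simp [hc.ne', hA]) hα hβ (by linarith),
    fun w ⟨hw, h⟩ =>
      lt_one_of_balance (p := fun w => (1 + 2 ^ n) * (w / (C * τ)) ^ n) hα hβ hw h⟩

/-- Case III equilibrium: there is a unique w > 0 with
α·w^(k−1)·(1 − (1+2^B)(w/(Cτ))^B) = β·w·(1+2^B)(w/(Cτ))^B, and this w satisfies
(1+2^B)(w/(Cτ))^B < 1. -/
theorem stmt10 (α β k C τ : ℝ) (B : ℤ) (hα : 0 < α) (hβ : 0 < β)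
    (hk0 : 0 < k) (hk1 : k < 1) (hC : 0 < C) (hτ : 0 < τ) (hB : 1 ≤ B) :
    (∃! w : ℝ, 0 < w ∧
      α * w ^ (k - 1) * (1 - (1 + (2 : ℝ) ^ B) * (w / (C * τ)) ^ B) =
        β * w * ((1 + (2 : ℝ) ^ B) * (w / (C * τ)) ^ B)) ∧
    (∀ w : ℝ, (0 < w ∧
        α * w ^ (k - 1) * (1 - (1 + (2 : ℝ) ^ B) * (w / (C * τ)) ^ B) =
          β * w * ((1 + (2 : ℝ) ^ B) * (w / (C * τ)) ^ B)) →
      (1 + (2 : ℝ) ^ B) * (w / (C * τ)) ^ B < 1) :=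
  stmt10_general α β k C τ B hα hβ hk1 hC hτ hB
end

section
/- Let α > 0, β > 0, 0 < k < 1, C > 0, τ > 0, κ > 0, and let B be an integer with B ≥ 1. Let w* be the unique positive solution of α·w^(k−1)·(1 − (w/(Cτ))^B) = β·w·(w/(Cτ))^B, and set q* = (w*/(Cτ))^B. Assume B > (2 − k)(1 − q*). Define M = (2 − k)(1 − q*)·α·(w*)^(k−1)/τ and N = B·α·(w*)^(k−1)/τ. Then every complex root λ of λ + κM + κN·exp(−λτ) = 0 has negative real part if and only if κ·α·(w*)^(k−1)·√(B² − (k−2)²(1−q*)²) < arccos((k−2)(1−q*)/B). -/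
/-!
Scaling by `κ α (w*)^(k-1) / τ` turns the characteristic equation into Hayes' equation
`z + a + b e^{-zτ} = 0` with `0 < a < b`; here `q* < 1` because at equilibrium the increase
`α (w*)^(k-1) (1 - q*)` balances the positive decrease `β w* q*`.

A root of Hayes' equation with `Re z ≥ 0` satisfies `|z + a| = |b e^{-zτ}| ≤ b`, so
`(Im z)² ≤ b² - a²`, and `cos (τ Im z) ≤ -a / b`; these are incompatible when
`τ √(b² - a²) < arccos (-a / b)`. Conversely, when this inequality fails, the intermediate value
theorem along `Re z ∈ [0, b]` produces a root with `Re z ≥ 0`.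
-/

open Real Complex

section Hayes

variable {a b τ : ℝ}

theorem hayes_root_iff (z : ℂ) :
    z + a + b * Complex.exp (-z * τ) = 0 ↔
      z.re + a + b * Real.exp (-(z.re * τ)) * Real.cos (z.im * τ) = 0 ∧
        z.im - b * Real.exp (-(z.re * τ)) * Real.sin (z.im * τ) = 0 := by
  rw [Complex.ext_iff]
  simp [Complex.exp_re, Complex.exp_im, Complex.mul_re, Complex.mul_im, Real.cos_neg,
    Real.sin_neg]
  constructor <;> rintro ⟨h1, h2⟩ <;> constructor <;> linarith

theorem re_neg_of_hayes_root (ha : 0 < a) (hab : a < b) (hτ : 0 < τ)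
    (hcrit : τ * √(b ^ 2 - a ^ 2) < Real.arccos (-a / b)) (z : ℂ)
    (hz : z + a + b * Complex.exp (-z * τ) = 0) : z.re < 0 := by
  by_contra! hx
  obtain ⟨hre, him⟩ := (hayes_root_iff z).1 hz
  set x := z.re
  set y := z.im
  set E := b * Real.exp (-(x * τ))
  have hb : 0 < b := ha.trans hab
  have hE : 0 < E := by positivity
  have hEb : E ≤ b := mul_le_of_le_one_right hb.le (Real.exp_le_one_iff.2 (by nlinarith))
  have hcos : x + a = -(E * Real.cos (y * τ)) := by linarith
  have hsin : y = E * Real.sin (y * τ) := by linarith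
  have hy : y ^ 2 ≤ b ^ 2 - a ^ 2 := by
    have hmod : (x + a) ^ 2 + y ^ 2 = E ^ 2 := by
      linear_combination (x + a - E * Real.cos (y * τ)) * hcos +
        (y + E * Real.sin (y * τ)) * hsin + E ^ 2 * Real.sin_sq_add_cos_sq (y * τ)
    nlinarith
  have hyτ : |y * τ| < Real.arccos (-a / b) := by
    rw [abs_mul, abs_of_pos hτ, mul_comm]
    exact (mul_le_mul_of_nonneg_left (Real.abs_le_sqrt hy) hτ.le).trans_lt hcrit
  -- cos (yτ) = -(x + a)/E ≤ -a/b, so |yτ| ≥ arccos (-a/b) since arccos is antitone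
  have hcos_le : Real.cos |y * τ| ≤ -a / b := by
    rw [Real.cos_abs, neg_div, le_neg, show -Real.cos (y * τ) = (x + a) / E by
      field_simp; linarith, div_le_div_iff₀ hb hE]
    nlinarith
  have := Real.arccos_le_arccos hcos_le
  rw [Real.arccos_cos (abs_nonneg _) (hyτ.le.trans (Real.arccos_le_pi _))] at this
  linarith

theorem exists_hayes_root_re_nonneg (ha : 0 < a) (hab : a < b) (hτ : 0 < τ)
    (hcrit : Real.arccos (-a / b) ≤ τ * √(b ^ 2 - a ^ 2)) :
    ∃ z : ℂ, z + a + b * Complex.exp (-z * τ) = 0 ∧ 0 ≤ z.re := by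
  have hb : 0 < b := ha.trans hab
  -- A root x + iθ/τ needs cos θ = -(x + a) e^{xτ} / b, which fixes θ = θ x ∈ [0, π], and
  -- then the imaginary part becomes f x = 0. Since arccos is clamped to π below -1, f is
  -- negative wherever the cosine condition cannot be met, so a zero of f meets it.
  set θ : ℝ → ℝ := fun x ↦ Real.arccos (-((x + a) * Real.exp (x * τ) / b))
  set f : ℝ → ℝ := fun x ↦ b * Real.exp (-(x * τ)) * Real.sin (θ x) - θ x / τ
  have hf : Continuous f := by fun_prop
  have hf0 : 0 ≤ f 0 := by
    have : b * √(1 - (-a / b) ^ 2) = √(b ^ 2 - a ^ 2) := by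
      rw [← Real.sqrt_sq hb.le, ← Real.sqrt_mul (sq_nonneg b), Real.sqrt_sq hb.le]
      congr 1
      field_simp
    simp only [f, θ, zero_add, zero_mul, neg_zero, Real.exp_zero, mul_one, ← neg_div,
      Real.sin_arccos]
    rw [this, sub_nonneg, div_le_iff₀ hτ]
    linarith
  have hθb : θ b = π := by
    refine Real.arccos_eq_pi.2 ?_
    rw [neg_le, neg_neg, le_div_iff₀ hb, one_mul]
    nlinarith [Real.one_le_exp (mul_nonneg hb.le hτ.le)]
  have hfb : f b < 0 := by
    simp only [f, hθb, Real.sin_pi, mul_zero, zero_sub, neg_lt_zero]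
    positivity
  obtain ⟨x, ⟨hx0, -⟩, hfx⟩ :=
    intermediate_value_Icc' hb.le hf.continuousOn ⟨hfb.le, hf0⟩
  have hθx : θ x ≠ π := by
    intro h
    simp only [f, h, Real.sin_pi, mul_zero, zero_sub, neg_eq_zero] at hfx
    exact (div_pos Real.pi_pos hτ).ne' hfx
  have hcos : Real.cos (θ x) = -((x + a) * Real.exp (x * τ) / b) := by
    refine Real.cos_arccos ?_ ?_
    · by_contra! h
      exact hθx (Real.arccos_eq_pi.2 h.le)
    · have : 0 ≤ (x + a) * Real.exp (x * τ) / b := by positivity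
      linarith
  refine ⟨⟨x, θ x / τ⟩, (hayes_root_iff _).2 ⟨?_, ?_⟩, hx0⟩
  · simp only [div_mul_cancel₀ _ hτ.ne', hcos, Real.exp_neg]
    field_simp
    ring
  · simp only [div_mul_cancel₀ _ hτ.ne']
    linarith [hfx]

theorem hayes_stable_iff (ha : 0 < a) (hab : a < b) (hτ : 0 < τ) :
    (∀ z : ℂ, z + a + b * Complex.exp (-z * τ) = 0 → z.re < 0) ↔
      τ * √(b ^ 2 - a ^ 2) < Real.arccos (-a / b) := by
  refine ⟨fun H ↦ ?_, re_neg_of_hayes_root ha hab hτ⟩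
  by_contra! hcrit
  obtain ⟨z, hz, hz0⟩ := exists_hayes_root_re_nonneg ha hab hτ hcrit
  exact (H z hz).not_ge hz0

theorem hayes_stable_iff_of_scale {s m n : ℝ} (hs : 0 < s) (hm : 0 < m) (hmn : m < n)
    (hτ : 0 < τ) :
    (∀ z : ℂ, z + s * m + s * n * Complex.exp (-z * τ) = 0 → z.re < 0) ↔
      s * τ * √(n ^ 2 - m ^ 2) < Real.arccos (-m / n) := by
  have hscale : √((s * n) ^ 2 - (s * m) ^ 2) = s * √(n ^ 2 - m ^ 2) := by
    rw [mul_pow, mul_pow, ← mul_sub, Real.sqrt_mul (by positivity), Real.sqrt_sq hs.le]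
  have := hayes_stable_iff (mul_pos hs hm) (mul_lt_mul_of_pos_left hmn hs) hτ
  rw [hscale, neg_div, mul_div_mul_left _ _ hs.ne', ← neg_div] at this
  push_cast at this
  convert this using 2
  ring

end Hayes

theorem stmt11_general (α β k C τ κ : ℝ) (B : ℤ) (w q M N : ℝ)
    (hα : 0 < α) (hβ : 0 < β) (hk1 : k < 1)
    (hC : 0 < C) (hτ : 0 < τ) (hκ : 0 < κ)
    (hw : 0 < w)
    (hweq : α * w ^ (k - 1) * (1 - (w / (C * τ)) ^ B) = β * w * (w / (C * τ)) ^ B)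
    (hq : q = (w / (C * τ)) ^ B)
    (hBq : (2 - k) * (1 - q) < (B : ℝ))
    (hM : M = (2 - k) * (1 - q) * α * w ^ (k - 1) / τ)
    (hN : N = (B : ℝ) * α * w ^ (k - 1) / τ) :
    (∀ z : ℂ, z + (κ : ℂ) * (M : ℂ) + (κ : ℂ) * (N : ℂ) * Complex.exp (-z * (τ : ℂ)) = 0 →
      z.re < 0) ↔
    κ * α * w ^ (k - 1) * Real.sqrt ((B : ℝ) ^ 2 - (k - 2) ^ 2 * (1 - q) ^ 2) <
      Real.arccos ((k - 2) * (1 - q) / (B : ℝ)) := by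
  have hgain : 0 < α * w ^ (k - 1) := mul_pos hα (Real.rpow_pos_of_pos hw _)
  have hq0 : 0 < q := hq ▸ zpow_pos (by positivity) B
  have hq1 : 0 < 1 - q := by
    have : 0 < α * w ^ (k - 1) * (1 - q) := hq ▸ hweq ▸ by positivity
    exact pos_of_mul_pos_right this hgain.le
  have hcrit := hayes_stable_iff_of_scale (s := κ * (α * w ^ (k - 1)) / τ)
    (by positivity) (mul_pos (by linarith) hq1) hBq hτ
  subst hM hN
  convert hcrit using 3
  · push_cast; ring_nf
  · field_simp
  · ring_nf
  · ring

/-- Case I local stability criterion: with w* the (unique) positive equilibrium,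
q* = (w*/(Cτ))^B, B > (2−k)(1−q*), M = (2−k)(1−q*)·α·(w*)^(k−1)/τ and
N = B·α·(w*)^(k−1)/τ, every root of λ + κM + κN·e^{−λτ} = 0 has negative real part iff
κ·α·(w*)^(k−1)·√(B² − (k−2)²(1−q*)²) < arccos((k−2)(1−q*)/B). -/
theorem stmt11 (α β k C τ κ : ℝ) (B : ℤ) (w q M N : ℝ)
    (hα : 0 < α) (hβ : 0 < β) (hk0 : 0 < k) (hk1 : k < 1)
    (hC : 0 < C) (hτ : 0 < τ) (hκ : 0 < κ) (hB : 1 ≤ B)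
    (hw : 0 < w)
    (hweq : α * w ^ (k - 1) * (1 - (w / (C * τ)) ^ B) = β * w * (w / (C * τ)) ^ B)
    (hq : q = (w / (C * τ)) ^ B)
    (hBq : (2 - k) * (1 - q) < (B : ℝ))
    (hM : M = (2 - k) * (1 - q) * α * w ^ (k - 1) / τ)
    (hN : N = (B : ℝ) * α * w ^ (k - 1) / τ) :
    (∀ z : ℂ, z + (κ : ℂ) * (M : ℂ) + (κ : ℂ) * (N : ℂ) * Complex.exp (-z * (τ : ℂ)) = 0 →
      z.re < 0) ↔
    κ * α * w ^ (k - 1) * Real.sqrt ((B : ℝ) ^ 2 - (k - 2) ^ 2 * (1 - q) ^ 2) <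
      Real.arccos ((k - 2) * (1 - q) / (B : ℝ)) :=
  stmt11_general α β k C τ κ B w q M N hα hβ hk1 hC hτ hκ hw hweq hq hBq hM hN
end

section
/- Let α > 0, β > 0, 0 < k < 1, C > 0, τ > 0, κ > 0, and let B be an integer with B ≥ 1. Let w* be the unique positive solution of α·w^(k−1)·(1 − 2(w/(Cτ))^B) = β·w·(w/(Cτ))^B, and set p* = 2(w*/(Cτ))^B. Assume B > (2 − k)(1 − p*). Define M = (2 − k)(1 − p*)·α·(w*)^(k−1)/τ and N = B·α·(w*)^(k−1)/τ. Then every complex root λ of λ + κM + κN·exp(−λτ) = 0 has negative real part if and only if κ·α·(w*)^(k−1)·√(B² − (k−2)²(1−p*)²) < arccos((k−2)(1−p*)/B). -/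
open Real Complex

/-!
For `0 < a < b` and `τ > 0`, a root `z` of `z + a + b e^{-zτ} = 0` with `Re z ≥ 0` satisfies
`|Im z| ≤ √(b² - a²)` and `b cos (τ Im z) ≤ -a`, which is impossible when
`τ √(b² - a²) < arccos (-a/b)`. Conversely, for `θ ∈ (0, π)` the point
`z = log (b τ sin θ / θ) / τ + i θ / τ` solves the imaginary part of the equation, has `Re z ≥ 0`
iff `θ ≤ b τ sin θ`, and solves the real part iff `G θ = log (b τ sin θ / θ) + a τ + θ cot θ = 0`.
If `arccos (-a/b) ≤ τ √(b² - a²)` then `G ≥ 0` at `θ₀ = arccos (-a/b)` and `G ≤ 0` at the first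
`θ₁ > θ₀` with `b τ sin θ₁ = θ₁`; since `sin θ / θ` decreases on `(0, π]`, a zero of `G` in between
gives a root with `Re z ≥ 0`. The theorem is this criterion for `a = κM`, `b = κN`; the
equilibrium equation forces `p* < 1`.
-/

theorem strictAntiOn_sin_div_self : StrictAntiOn (fun x => Real.sin x / x) (Set.Ioc 0 π) := by
  intro x hx y hy hxy
  simpa using strictConcaveOn_sin_Icc.secant_strict_mono (a := 0) ⟨le_rfl, pi_pos.le⟩
    ⟨hx.1.le, hx.2⟩ ⟨hy.1.le, hy.2⟩ hx.1.ne' hy.1.ne' hxy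

noncomputable def delayChar (a b τ : ℝ) (z : ℂ) : ℂ := z + a + b * Complex.exp (-z * τ)

theorem delayChar_eq_zero_iff (a b τ : ℝ) (z : ℂ) :
    delayChar a b τ z = 0 ↔
      z.re + a + b * (Real.exp (-(z.re * τ)) * Real.cos (z.im * τ)) = 0 ∧
      z.im = b * (Real.exp (-(z.re * τ)) * Real.sin (z.im * τ)) := by
  simp [delayChar, Complex.ext_iff, Complex.exp_re, Complex.exp_im, add_neg_eq_zero]

variable {a b τ : ℝ}

noncomputable def delayPhase (a b τ θ : ℝ) : ℝ :=
  Real.log (b * τ * Real.sin θ / θ) + a * τ + θ * Real.cos θ / Real.sin θ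

theorem continuousOn_delayPhase (hb : 0 < b) (hτ : 0 < τ) {s : Set ℝ}
    (hs : ∀ θ ∈ s, 0 < θ ∧ 0 < Real.sin θ) : ContinuousOn (delayPhase a b τ) s := by
  refine ((ContinuousOn.log ?_ fun θ hθ => ?_).add continuousOn_const).add
    (ContinuousOn.div (by fun_prop) (by fun_prop) fun θ hθ => (hs θ hθ).2.ne')
  · fun_prop (disch := exact fun θ hθ => (hs θ hθ).1.ne')
  · obtain ⟨hθ, hsin⟩ := hs θ hθ
    positivity

theorem delayChar_eq_zero_of_delayPhase_eq_zero (hb : 0 < b) (hτ : 0 < τ) {θ : ℝ} (hθ : 0 < θ)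
    (hsin : 0 < Real.sin θ) (h : delayPhase a b τ θ = 0) :
    delayChar a b τ (↑(Real.log (b * τ * Real.sin θ / θ) / τ) + ↑(θ / τ) * I) = 0 := by
  have hexp : Real.exp (-(Real.log (b * τ * Real.sin θ / θ) / τ * τ)) =
      θ / (b * τ * Real.sin θ) := by
    rw [div_mul_cancel₀ _ hτ.ne', Real.exp_neg, Real.exp_log (by positivity), inv_div]
  rw [delayChar_eq_zero_iff]
  simp only [add_re, ofReal_re, mul_re, I_re, mul_zero, ofReal_im, I_im, mul_one, sub_self,
    add_zero, add_im, mul_im, zero_add, div_mul_cancel₀ θ hτ.ne', hexp]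
  constructor
  · rw [← zero_div τ, ← h, delayPhase]
    field_simp
  · field_simp

theorem sq_im_le_and_mul_cos_le_of_delayChar_eq_zero (ha : 0 ≤ a) (hτ : 0 ≤ τ) {z : ℂ}
    (hz : delayChar a b τ z = 0) (hre : 0 ≤ z.re) :
    z.im ^ 2 ≤ b ^ 2 - a ^ 2 ∧ b * Real.cos (z.im * τ) ≤ -a := by
  obtain ⟨hRe, hIm⟩ := (delayChar_eq_zero_iff a b τ z).1 hz
  set E := Real.exp (-(z.re * τ))
  have hE0 : 0 < E := Real.exp_pos _
  have hE1 : E ≤ 1 := Real.exp_le_one_iff.2 (by nlinarith)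
  have hmod : (z.re + a) ^ 2 + z.im ^ 2 = b ^ 2 * E ^ 2 := by
    linear_combination (z.re + a - b * (E * Real.cos (z.im * τ))) * hRe
      + (z.im + b * (E * Real.sin (z.im * τ))) * hIm
      + (b * E) ^ 2 * Real.sin_sq_add_cos_sq (z.im * τ)
  have hE2 : b ^ 2 * E ^ 2 ≤ b ^ 2 := mul_le_of_le_one_right (sq_nonneg b) (pow_le_one₀ hE0.le hE1)
  have hbcE : b * Real.cos (z.im * τ) * E ≤ 0 := by linarith
  have hbc : b * Real.cos (z.im * τ) ≤ 0 := nonpos_of_mul_nonpos_left hbcE hE0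
  constructor
  · nlinarith
  · nlinarith

theorem re_neg_of_delayChar_eq_zero (ha : 0 ≤ a) (hb : 0 < b) (hτ : 0 ≤ τ)
    (h : τ * √(b ^ 2 - a ^ 2) < arccos (-a / b)) {z : ℂ} (hz : delayChar a b τ z = 0) :
    z.re < 0 := by
  by_contra! hre
  obtain ⟨him, hcos⟩ := sq_im_le_and_mul_cos_le_of_delayChar_eq_zero ha hτ hz hre
  have hlt : |z.im| * τ < arccos (-a / b) :=
    calc |z.im| * τ ≤ √(b ^ 2 - a ^ 2) * τ := by gcongr; exact Real.abs_le_sqrt him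
      _ < arccos (-a / b) := by linarith
  have hcos_abs : Real.cos (|z.im| * τ) ≤ -a / b := by
    rw [← abs_of_nonneg hτ, ← abs_mul, Real.cos_abs, le_div_iff₀ hb]
    linarith
  have hge : arccos (-a / b) ≤ |z.im| * τ :=
    calc arccos (-a / b) ≤ arccos (Real.cos (|z.im| * τ)) := arccos_le_arccos hcos_abs
      _ = |z.im| * τ := arccos_cos (by positivity) (hlt.le.trans (arccos_le_pi _))
  linarith

theorem sin_arccos_div {b : ℝ} (hb : 0 < b) (a : ℝ) :
    Real.sin (arccos (a / b)) = √(b ^ 2 - a ^ 2) / b := by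
  rw [sin_arccos, show 1 - (a / b) ^ 2 = (b ^ 2 - a ^ 2) / b ^ 2 by field_simp,
    Real.sqrt_div' _ (sq_nonneg b), Real.sqrt_sq hb.le]

theorem exists_mul_sin_eq_self {c θ₀ : ℝ} (hθ₀ : θ₀ ≤ π) (h : θ₀ ≤ c * Real.sin θ₀) :
    ∃ θ ∈ Set.Ico θ₀ π, c * Real.sin θ = θ := by
  obtain ⟨θ, ⟨hθ₀θ, hθπ⟩, hθ⟩ : ∃ θ ∈ Set.Icc θ₀ π, c * Real.sin θ - θ = 0 :=
    intermediate_value_Icc' hθ₀ (by fun_prop) ⟨by simp [pi_pos.le], sub_nonneg.2 h⟩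
  refine ⟨θ, ⟨hθ₀θ, hθπ.lt_of_ne ?_⟩, sub_eq_zero.1 hθ⟩
  rintro rfl
  simp [pi_ne_zero] at hθ

theorem one_le_mul_sin_div_self {c θ θ₁ : ℝ} (hc : 0 ≤ c) (hθ : 0 < θ) (hθθ₁ : θ ≤ θ₁)
    (hθ₁π : θ₁ ≤ π) (hθ₁ : c * Real.sin θ₁ = θ₁) : 1 ≤ c * Real.sin θ / θ :=
  calc 1 = c * (Real.sin θ₁ / θ₁) := by
        rw [← mul_div_assoc, hθ₁, div_self (hθ.trans_le hθθ₁).ne']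
    _ ≤ c * (Real.sin θ / θ) := by
        gcongr c * ?_
        exact strictAntiOn_sin_div_self.antitoneOn ⟨hθ, hθθ₁.trans hθ₁π⟩
          ⟨hθ.trans_le hθθ₁, hθ₁π⟩ hθθ₁
    _ = c * Real.sin θ / θ := (mul_div_assoc _ _ _).symm

theorem exists_delayChar_eq_zero_re_nonneg (ha : 0 < a) (hab : a < b) (hτ : 0 < τ)
    (h : arccos (-a / b) ≤ τ * √(b ^ 2 - a ^ 2)) :
    ∃ z, delayChar a b τ z = 0 ∧ 0 ≤ z.re := by
  have hb : 0 < b := ha.trans hab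
  set θ₀ := arccos (-a / b)
  have hab' : -1 < -a / b := by rw [lt_div_iff₀ hb]; linarith
  have hθ₀ : 0 < θ₀ := arccos_pos.2 (by rw [div_lt_one hb]; linarith)
  have hcos₀ : Real.cos θ₀ = -a / b := cos_arccos hab'.le (by rw [div_le_one hb]; linarith)
  have hθ₀sin : θ₀ ≤ b * τ * Real.sin θ₀ := by
    rw [sin_arccos_div hb, neg_sq, mul_right_comm, mul_div_cancel₀ _ hb.ne', mul_comm]
    exact h
  obtain ⟨θ₁, ⟨hθ₀₁, hθ₁π⟩, hθ₁⟩ := exists_mul_sin_eq_self (arccos_le_pi _) hθ₀sin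
  have hpos : ∀ θ ∈ Set.Icc θ₀ θ₁, 0 < θ ∧ 0 < Real.sin θ := fun θ hθ =>
    ⟨hθ₀.trans_le hθ.1, sin_pos_of_pos_of_lt_pi (hθ₀.trans_le hθ.1) (hθ.2.trans_lt hθ₁π)⟩
  obtain ⟨-, hsin₀⟩ := hpos θ₀ ⟨le_rfl, hθ₀₁⟩
  obtain ⟨hθ₁0, hsin₁⟩ := hpos θ₁ ⟨hθ₀₁, le_rfl⟩
  have hG₀ : 0 ≤ delayPhase a b τ θ₀ := by
    have hlog : 0 ≤ Real.log (b * τ * Real.sin θ₀ / θ₀) :=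
      Real.log_nonneg ((one_le_div hθ₀).2 hθ₀sin)
    have hcot₀ : -(a * τ) ≤ θ₀ * Real.cos θ₀ / Real.sin θ₀ := by
      have hscaled : a / b * θ₀ ≤ a / b * (b * τ * Real.sin θ₀) :=
        mul_le_mul_of_nonneg_left hθ₀sin (by positivity)
      rw [show a / b * (b * τ * Real.sin θ₀) = a * τ * Real.sin θ₀ by field_simp] at hscaled
      rw [hcos₀, le_div_iff₀ hsin₀, neg_div, mul_neg, mul_comm θ₀]
      linarith
    rw [delayPhase]; linarith
  have hG₁ : delayPhase a b τ θ₁ ≤ 0 := by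
    have hcos₁ : Real.cos θ₁ ≤ -a / b := hcos₀ ▸ cos_le_cos_of_nonneg_of_le_pi hθ₀.le hθ₁π.le hθ₀₁
    have hcot₁ : θ₁ * Real.cos θ₁ / Real.sin θ₁ ≤ -(a * τ) := by
      rw [div_le_iff₀ hsin₁]
      calc θ₁ * Real.cos θ₁ = b * τ * Real.sin θ₁ * Real.cos θ₁ := by rw [hθ₁]
        _ ≤ b * τ * Real.sin θ₁ * (-a / b) := by gcongr
        _ = -(a * τ) * Real.sin θ₁ := by field_simp
    rw [delayPhase, hθ₁, div_self hθ₁0.ne', Real.log_one]; linarith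
  obtain ⟨θ, hθ, hGθ⟩ : ∃ θ ∈ Set.Icc θ₀ θ₁, delayPhase a b τ θ = 0 :=
    intermediate_value_Icc' hθ₀₁ (continuousOn_delayPhase hb hτ hpos) ⟨hG₁, hG₀⟩
  have hfθ : 1 ≤ b * τ * Real.sin θ / θ :=
    one_le_mul_sin_div_self (by positivity) (hpos θ hθ).1 hθ.2 hθ₁π.le hθ₁
  exact ⟨_, delayChar_eq_zero_of_delayPhase_eq_zero hb hτ (hpos θ hθ).1 (hpos θ hθ).2 hGθ,
    by simpa using div_nonneg (Real.log_nonneg hfθ) hτ.le⟩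

theorem forall_delayChar_eq_zero_re_neg_iff (ha : 0 < a) (hab : a < b) (hτ : 0 < τ) :
    (∀ z, delayChar a b τ z = 0 → z.re < 0) ↔ τ * √(b ^ 2 - a ^ 2) < arccos (-a / b) := by
  refine ⟨fun h => ?_, fun h z => re_neg_of_delayChar_eq_zero ha.le (ha.trans hab) hτ.le h⟩
  by_contra! hle
  obtain ⟨z, hz, hre⟩ := exists_delayChar_eq_zero_re_nonneg ha hab hτ hle
  exact (h z hz).not_ge hre

theorem one_sub_two_mul_pos_of_mul_eq {s c q : ℝ} (hs : 0 < s) (hc : 0 < c)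
    (h : s * (1 - 2 * q) = c * q) : 0 < 1 - 2 * q := by
  by_contra! hle
  nlinarith [mul_nonpos_of_nonneg_of_nonpos hs.le hle]

theorem stmt12_general (α β k C τ κ : ℝ) (B : ℤ) (w p M N : ℝ)
    (hα : 0 < α) (hβ : 0 < β) (hk1 : k < 1)
    (hτ : 0 < τ) (hκ : 0 < κ)
    (hw : 0 < w)
    (hweq : α * w ^ (k - 1) * (1 - 2 * (w / (C * τ)) ^ B) = β * w * (w / (C * τ)) ^ B)
    (hp : p = 2 * (w / (C * τ)) ^ B)
    (hBp : (2 - k) * (1 - p) < (B : ℝ))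
    (hM : M = (2 - k) * (1 - p) * α * w ^ (k - 1) / τ)
    (hN : N = (B : ℝ) * α * w ^ (k - 1) / τ) :
    (∀ z : ℂ, z + (κ : ℂ) * (M : ℂ) + (κ : ℂ) * (N : ℂ) * Complex.exp (-z * (τ : ℂ)) = 0 →
      z.re < 0) ↔
    κ * α * w ^ (k - 1) * Real.sqrt ((B : ℝ) ^ 2 - (k - 2) ^ 2 * (1 - p) ^ 2) <
      Real.arccos ((k - 2) * (1 - p) / (B : ℝ)) := by
  have hs : 0 < α * w ^ (k - 1) := by positivity
  have hp1 : 0 < 1 - p := hp ▸ one_sub_two_mul_pos_of_mul_eq hs (by positivity) hweq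
  have hm : 0 < (2 - k) * (1 - p) := mul_pos (by linarith) hp1
  have key := forall_delayChar_eq_zero_re_neg_iff (a := κ * M) (b := κ * N) (τ := τ)
    (by rw [hM]; positivity) (by rw [hM, hN]; gcongr) hτ
  have hsqrt : τ * √((κ * N) ^ 2 - (κ * M) ^ 2) =
      κ * α * w ^ (k - 1) * √((B : ℝ) ^ 2 - (k - 2) ^ 2 * (1 - p) ^ 2) := by
    rw [show (κ * N) ^ 2 - (κ * M) ^ 2 = (κ * (α * w ^ (k - 1)) / τ) ^ 2 *
        ((B : ℝ) ^ 2 - (k - 2) ^ 2 * (1 - p) ^ 2) by rw [hM, hN]; ring,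
      Real.sqrt_mul (sq_nonneg _), Real.sqrt_sq (by positivity)]
    field_simp
  have harg : -(κ * M) / (κ * N) = (k - 2) * (1 - p) / B := by
    rw [hM, hN]; field_simp; ring
  rw [← hsqrt, ← harg, ← key]
  simp [delayChar]

/-- Case II local stability criterion: with w* the (unique) positive equilibrium,
p* = 2(w*/(Cτ))^B, B > (2−k)(1−p*), M = (2−k)(1−p*)·α·(w*)^(k−1)/τ and
N = B·α·(w*)^(k−1)/τ, every root of λ + κM + κN·e^{−λτ} = 0 has negative real part iff
κ·α·(w*)^(k−1)·√(B² − (k−2)²(1−p*)²) < arccos((k−2)(1−p*)/B). -/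
theorem stmt12 (α β k C τ κ : ℝ) (B : ℤ) (w p M N : ℝ)
    (hα : 0 < α) (hβ : 0 < β) (hk0 : 0 < k) (hk1 : k < 1)
    (hC : 0 < C) (hτ : 0 < τ) (hκ : 0 < κ) (hB : 1 ≤ B)
    (hw : 0 < w)
    (hweq : α * w ^ (k - 1) * (1 - 2 * (w / (C * τ)) ^ B) = β * w * (w / (C * τ)) ^ B)
    (hp : p = 2 * (w / (C * τ)) ^ B)
    (hBp : (2 - k) * (1 - p) < (B : ℝ))
    (hM : M = (2 - k) * (1 - p) * α * w ^ (k - 1) / τ)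
    (hN : N = (B : ℝ) * α * w ^ (k - 1) / τ) :
    (∀ z : ℂ, z + (κ : ℂ) * (M : ℂ) + (κ : ℂ) * (N : ℂ) * Complex.exp (-z * (τ : ℂ)) = 0 →
      z.re < 0) ↔
    κ * α * w ^ (k - 1) * Real.sqrt ((B : ℝ) ^ 2 - (k - 2) ^ 2 * (1 - p) ^ 2) <
      Real.arccos ((k - 2) * (1 - p) / (B : ℝ)) :=
  stmt12_general α β k C τ κ B w p M N hα hβ hk1 hτ hκ hw hweq hp hBp hM hN
end
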